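/- Let G be a finite simple graph, let k ≥ 3 be an integer, let β be an eigenvalue of the adjacency matrix of G, and let λ be a complex number with λ^k = β². Then λ is an eigenvalue of the k-power hypergraph G^(k). -/

import Mathlib

open Finset

/-- `(lam, x)` is an eigenpair of the `k`-uniform hypergraph with hyperedge set `E`:
`x` is nonzero and for every vertex `i`,
`lam * x i ^ (k-1) = ∑_{e ∈ E, i ∈ e} ∏_{v ∈ e \ {i}} x v`. -/
def IsHypergraphEigenpair {W : Type*} [Fintype W] [DecidableEq W]
    (k : ℕ) (E : Finset (Finset W)) (lam : ℂ) (x : W → ℂ) : Prop :=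
  x ≠ 0 ∧ ∀ i : W, lam * x i ^ (k - 1) =
    ∑ e ∈ E.filter (fun e => i ∈ e), ∏ v ∈ e.erase i, x v

/-- `lam` is an eigenvalue of the `k`-uniform hypergraph with hyperedge set `E`. -/
def IsHypergraphEigenvalue {W : Type*} [Fintype W] [DecidableEq W]
    (k : ℕ) (E : Finset (Finset W)) (lam : ℂ) : Prop :=
  ∃ x, IsHypergraphEigenpair k E lam x

/-- The hyperedge of the `k`-power hypergraph `G^(k)` corresponding to the edge `e` of `G`:
it consists of the two endpoints of `e` together with the `k - 2` added vertices on `e`. -/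
def powerEdge {V : Type*} [Fintype V] [DecidableEq V] (G : SimpleGraph V) [DecidableRel G.Adj]
    (k : ℕ) (e : G.edgeSet) : Finset (V ⊕ (G.edgeSet × Fin (k - 2))) :=
  Finset.univ.filter (fun v =>
    (∃ i, v = Sum.inl i ∧ i ∈ (e : Sym2 V)) ∨ ∃ t, v = Sum.inr (e, t))

/-- The hyperedge set of the `k`-power hypergraph `G^(k)`, whose vertices are the vertices of `G`
(`Sum.inl`) together with `k - 2` new vertices for each edge of `G` (`Sum.inr`). -/
def powerEdges {V : Type*} [Fintype V] [DecidableEq V] (G : SimpleGraph V) [DecidableRel G.Adj]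
    (k : ℕ) : Finset (Finset (V ⊕ (G.edgeSet × Fin (k - 2)))) :=
  Finset.univ.image (powerEdge G k)

/-!
Let `y` be a `β`-eigenvector of `G` and choose `x i` with `x i ^ k = y i ^ 2`. On the `k - 2` new
vertices of an edge `ab` put numbers `z` with `z ^ k = y a y b / β` and
`x a x b ∏ z = λ y a y b / β`; the two requirements are compatible because `λ ^ k = β ^ 2`, and are
met by taking all but one `z` equal to a fixed `k`-th root of `y a y b / β`. The equation at a new
vertex of `ab` then reads `λ z ^ k = x a x b ∏ z`, and at an original vertex `i`, multiplied by
`x i`, it becomes `λ y i ^ 2 = (λ y i / β) ∑_{j ∼ i} y j`, the eigenvalue equation of `G`.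
For `λ = 0` an indicator vector of a single vertex is an eigenvector of any hypergraph whose edges
have at least three vertices.
-/

theorem Finset.disjSum_erase_inl {α β : Type*} [DecidableEq α] [DecidableEq β]
    (s : Finset α) (t : Finset β) (a : α) :
    (s.disjSum t).erase (Sum.inl a) = (s.erase a).disjSum t := by
  ext (x | x) <;> simp

theorem Finset.disjSum_erase_inr {α β : Type*} [DecidableEq α] [DecidableEq β]
    (s : Finset α) (t : Finset β) (b : β) :
    (s.disjSum t).erase (Sum.inr b) = s.disjSum (t.erase b) := by
  ext (x | x) <;> simp

theorem exists_pow_eq_and_mul_prod_eq {K : Type*} [Field K] [IsAlgClosed K] {k m : ℕ}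
    (hm : 0 < m) (hkm : k = m + 2) {lam A q : K} (hlam : lam ≠ 0)
    (hA : A ^ k = lam ^ k * q ^ 2) :
    ∃ z : Fin m → K, (∀ t, z t ^ k = q) ∧ A * ∏ t, z t = lam * q := by
  obtain ⟨n, rfl⟩ : ∃ n, m = n + 1 := ⟨m - 1, by omega⟩
  subst hkm
  rcases eq_or_ne q 0 with rfl | hq
  · exact ⟨0, fun _ => by simp, by simp⟩
  obtain ⟨w, hw⟩ := IsAlgClosed.exists_pow_nat_eq q (by omega : 0 < n + 1 + 2)
  have hw0 : w ≠ 0 := by rintro rfl; simp_all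
  have hA0 : A ≠ 0 := by rintro rfl; simp_all
  refine ⟨Fin.cons (lam * q / (A * w ^ n)) fun _ => w, fun t => ?_, ?_⟩
  · refine Fin.cases ?_ (fun _ => by simpa using hw) t
    rw [Fin.cons_zero, div_pow, mul_pow, mul_pow, ← pow_mul, mul_comm n, pow_mul, hw, hA]
    field_simp
    ring
  · rw [Fin.prod_cons]
    simp only [prod_const, card_univ, Fintype.card_fin]
    field_simp

theorem mul_pow_pred_eq_mul_prod_erase {R ι : Type*} [CommRing R] [IsDomain R] [Fintype ι]
    [DecidableEq ι] {k : ℕ} (hk : 2 ≤ k) {lam A q : R} {z : ι → R}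
    (hA : A ^ k = lam ^ k * q ^ 2) (hz : ∀ t, z t ^ k = q) (hprod : A * ∏ t, z t = lam * q)
    (t : ι) : lam * z t ^ (k - 1) = A * ∏ s ∈ univ.erase t, z s := by
  rcases eq_or_ne (z t) 0 with hzt | hzt
  · have hq : q = 0 := by rw [← hz t, hzt, zero_pow (by omega : k ≠ 0)]
    have hA0 : A = 0 := pow_eq_zero_iff (by omega : k ≠ 0) |>.mp (by rw [hA, hq]; ring)
    rw [hzt, hA0, zero_pow (by omega : k - 1 ≠ 0), mul_zero, zero_mul]
  · refine mul_left_cancel₀ hzt ?_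
    calc z t * (lam * z t ^ (k - 1)) = lam * z t ^ k := by
          rw [mul_left_comm, ← pow_succ', Nat.sub_add_cancel (by omega)]
      _ = A * ∏ s, z s := by rw [hz, hprod]
      _ = z t * (A * ∏ s ∈ univ.erase t, z s) := by
          rw [← mul_prod_erase _ _ (mem_univ t)]; ring

theorem mul_pow_pred_eq_sum {K ι : Type*} [Field K] (s : Finset ι) {k : ℕ} (hk : 2 ≤ k)
    {lam β xi yi : K} {y w : ι → K} (hβ : β ≠ 0) (hxi : xi ^ k = yi ^ 2)
    (hy : ∑ j ∈ s, y j = β * yi) (hw : ∀ j ∈ s, xi * w j = lam * (yi * y j / β))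
    (hw0 : yi = 0 → ∀ j ∈ s, w j = 0) :
    lam * xi ^ (k - 1) = ∑ j ∈ s, w j := by
  rcases eq_or_ne yi 0 with hyi | hyi
  · have hxi0 : xi = 0 := pow_eq_zero_iff (by omega : k ≠ 0) |>.mp (by rw [hxi, hyi]; ring)
    rw [sum_eq_zero (hw0 hyi), hxi0, zero_pow (by omega : k - 1 ≠ 0), mul_zero]
  have hxi0 : xi ≠ 0 := by
    rintro rfl
    exact hyi (pow_eq_zero_iff two_ne_zero |>.mp (by rw [← hxi, zero_pow (by omega : k ≠ 0)]))
  refine mul_left_cancel₀ hxi0 ?_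
  calc xi * (lam * xi ^ (k - 1)) = lam * yi ^ 2 := by
        rw [mul_left_comm, ← pow_succ', Nat.sub_add_cancel (by omega), hxi]
    _ = ∑ j ∈ s, lam * (yi * y j / β) := by
        rw [← mul_sum, ← sum_div, ← mul_sum, hy]; field_simp
    _ = xi * ∑ j ∈ s, w j := by rw [mul_sum]; exact sum_congr rfl fun j hj => (hw j hj).symm

theorem Sym2.exists_fun_forall_mk {α β : Type*} {P : α → α → β → Prop}
    (hP : ∀ a b w, P a b w → P b a w) (h : ∀ a b, ∃ w, P a b w) :
    ∃ f : Sym2 α → β, ∀ a b, P a b (f s(a, b)) := by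
  have : ∀ s : Sym2 α, ∃ w, ∀ a b, s = s(a, b) → P a b w := by
    refine Sym2.ind fun a b => ?_
    obtain ⟨w, hw⟩ := h a b
    refine ⟨w, fun c d hcd => ?_⟩
    rcases Sym2.eq_iff.mp hcd with ⟨rfl, rfl⟩ | ⟨rfl, rfl⟩
    exacts [hw, hP _ _ _ hw]
  choose f hf using this
  exact ⟨f, fun a b => hf _ a b rfl⟩

theorem exists_sym2_pow_eq_and_mul_prod_eq {α K : Type*} [Field K] [IsAlgClosed K] {k : ℕ}
    (hk : 3 ≤ k) {lam β : K} (hlam : lam ≠ 0) {X y : α → K}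
    (hXX : ∀ a b, (X a * X b) ^ k = lam ^ k * (y a * y b / β) ^ 2) :
    ∃ z : Sym2 α → Fin (k - 2) → K, ∀ a b, (∀ t, z s(a, b) t ^ k = y a * y b / β) ∧
      X a * X b * ∏ t, z s(a, b) t = lam * (y a * y b / β) :=
  Sym2.exists_fun_forall_mk (fun a b w hw => by rwa [mul_comm (y b), mul_comm (X b)])
    fun a b => exists_pow_eq_and_mul_prod_eq (by omega) (by omega) hlam (hXX a b)

theorem isHypergraphEigenvalue_zero {W : Type*} [Fintype W] [DecidableEq W] [Nonempty W]
    (k : ℕ) {E : Finset (Finset W)} (hE : ∀ e ∈ E, 3 ≤ #e) : IsHypergraphEigenvalue k E 0 := by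
  obtain ⟨w⟩ := ‹Nonempty W›
  refine ⟨Pi.single w 1, by simp, fun i => ?_⟩
  rw [zero_mul, eq_comm]
  refine sum_eq_zero fun e he => ?_
  have hcard : 1 < #(e.erase i) := by
    have := pred_card_le_card_erase (s := e) (a := i)
    have := hE e (mem_filter.mp he).1
    omega
  obtain ⟨v, hv, hvw⟩ := exists_mem_ne hcard w
  exact prod_eq_zero hv (Pi.single_eq_of_ne hvw 1)

section PowerHypergraph

variable {V : Type*} [Fintype V] [DecidableEq V] (G : SimpleGraph V) [DecidableRel G.Adj] {k : ℕ}

theorem powerEdge_eq_disjSum (e : G.edgeSet) :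
    powerEdge G k e = (e : Sym2 V).toFinset.disjSum (univ.map (.sectR e (Fin (k - 2)))) := by
  ext (v | ⟨e', t⟩) <;> simp [powerEdge, Sym2.mem_toFinset, eq_comm]

theorem card_powerEdge (hk : 2 ≤ k) (e : G.edgeSet) : #(powerEdge G k e) = k := by
  rw [powerEdge_eq_disjSum, card_disjSum, card_map, card_univ, Fintype.card_fin,
    Sym2.card_toFinset_of_not_isDiag _ (G.not_isDiag_of_mem_edgeSet e.2)]
  omega

theorem inr_mem_powerEdge {e e' : G.edgeSet} {t : Fin (k - 2)} :
    Sum.inr (e', t) ∈ powerEdge G k e ↔ e' = e := by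
  simp [powerEdge]

theorem powerEdge_injective (hk : 3 ≤ k) : Function.Injective (powerEdge G k) := by
  intro e e' h
  have ht : Sum.inr (e, ⟨0, by omega⟩) ∈ powerEdge G k e := (inr_mem_powerEdge G).mpr rfl
  rwa [h, inr_mem_powerEdge] at ht

theorem sum_filter_powerEdges {M : Type*} [AddCommMonoid M] (hk : 3 ≤ k)
    (w : V ⊕ (G.edgeSet × Fin (k - 2))) (f : Finset (V ⊕ (G.edgeSet × Fin (k - 2))) → M) :
    ∑ h ∈ (powerEdges G k).filter (w ∈ ·), f h =
      ∑ e ∈ univ.filter (w ∈ powerEdge G k ·), f (powerEdge G k e) := by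
  rw [powerEdges, filter_image, sum_image (powerEdge_injective G hk).injOn]

theorem sum_incidentEdges_eq_sum_neighborFinset {M : Type*} [AddCommMonoid M] (i : V)
    {g : G.edgeSet → M} {f : V → M} (hgf : ∀ j (h : G.Adj i j), g ⟨s(i, j), h⟩ = f j) :
    ∑ e ∈ univ.filter (fun e : G.edgeSet => i ∈ (e : Sym2 V)), g e =
      ∑ j ∈ G.neighborFinset i, f j := by
  symm
  refine sum_bij (fun j hj => ⟨s(i, j), by simpa using hj⟩) (by simp)
    (fun _ _ _ _ h => Sym2.congr_right.mp (congrArg Subtype.val h)) (fun e he => ?_)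
    (fun j hj => (hgf j _).symm)
  obtain ⟨j, hj⟩ := Sym2.mem_iff_exists.mp (mem_filter.mp he).2
  refine ⟨j, ?_, Subtype.ext hj.symm⟩
  rw [SimpleGraph.mem_neighborFinset, ← SimpleGraph.mem_edgeSet, ← hj]
  exact e.2

variable {R : Type*} [CommSemiring R]

theorem sum_powerEdges_inl (hk : 3 ≤ k) (X : V → R) (z : Sym2 V → Fin (k - 2) → R) (i : V) :
    ∑ h ∈ (powerEdges G k).filter (Sum.inl i ∈ ·),
        ∏ v ∈ h.erase (Sum.inl i), Sum.elim X (fun p => z p.1 p.2) v =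
      ∑ j ∈ G.neighborFinset i, X j * ∏ t, z s(i, j) t := by
  rw [sum_filter_powerEdges G hk]
  simp only [powerEdge_eq_disjSum, inl_mem_disjSum, Sym2.mem_toFinset]
  refine sum_incidentEdges_eq_sum_neighborFinset G i fun j hij => ?_
  rw [Finset.disjSum_erase_inl, Sym2.toFinset_mk_eq, erase_insert (by simpa using hij.ne),
    prod_disjSum, prod_singleton, prod_map]
  rfl

theorem sum_powerEdges_inr (hk : 3 ≤ k) (X : V → R) (z : Sym2 V → Fin (k - 2) → R)
    {e : G.edgeSet} {a b : V} (he : (e : Sym2 V) = s(a, b)) (t : Fin (k - 2)) :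
    ∑ h ∈ (powerEdges G k).filter (Sum.inr (e, t) ∈ ·),
        ∏ v ∈ h.erase (Sum.inr (e, t)), Sum.elim X (fun p => z p.1 p.2) v =
      X a * X b * ∏ s ∈ univ.erase t, z s(a, b) s := by
  have hab : a ≠ b := G.ne_of_adj (by rw [← SimpleGraph.mem_edgeSet, ← he]; exact e.2)
  rw [sum_filter_powerEdges G hk, filter_congr fun e' _ => inr_mem_powerEdge G, filter_eq,
    if_pos (mem_univ _), sum_singleton, powerEdge_eq_disjSum, Finset.disjSum_erase_inr,
    show (e, t) = Function.Embedding.sectR e (Fin (k - 2)) t from rfl, ← map_erase,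
    prod_disjSum, prod_map, he, Sym2.toFinset_mk_eq, prod_pair hab]
  simp only [Sum.elim_inl, Sum.elim_inr, Function.Embedding.sectR_apply, he]

theorem isHypergraphEigenvalue_powerEdges_zero [Nonempty V] (hk : 3 ≤ k) :
    IsHypergraphEigenvalue k (powerEdges G k) 0 := by
  refine isHypergraphEigenvalue_zero k fun h hh => ?_
  obtain ⟨e, -, rfl⟩ := mem_image.mp hh
  rw [card_powerEdge G (by omega)]
  exact hk

theorem isHypergraphEigenpair_powerEdges (hk : 3 ≤ k) {lam : ℂ} {X : V → ℂ}
    {z : Sym2 V → Fin (k - 2) → ℂ} (hX : X ≠ 0)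
    (hinl : ∀ i, lam * X i ^ (k - 1) = ∑ j ∈ G.neighborFinset i, X j * ∏ t, z s(i, j) t)
    (hinr : ∀ a b, G.Adj a b → ∀ t,
      lam * z s(a, b) t ^ (k - 1) = X a * X b * ∏ s ∈ univ.erase t, z s(a, b) s) :
    IsHypergraphEigenpair k (powerEdges G k) lam (Sum.elim X fun p => z p.1 p.2) := by
  refine ⟨fun h => hX (funext fun i => congrFun h (Sum.inl i)), ?_⟩
  rintro (i | ⟨⟨e, he⟩, t⟩)
  · rw [sum_powerEdges_inl G hk]
    exact hinl i
  · induction e using Sym2.ind with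
    | _ a b =>
      rw [sum_powerEdges_inr G hk X z rfl]
      exact hinr a b he t

end PowerHypergraph

/-- **(Zhou et al.)** If `β` is an eigenvalue of the adjacency matrix of `G` and `lam^k = β²`
with `k ≥ 3`, then `lam` is an eigenvalue of the k-power hypergraph `G^(k)`. -/
theorem eigenvalue_of_graph_eigenvalue
    {V : Type*} [Fintype V] [DecidableEq V] (G : SimpleGraph V) [DecidableRel G.Adj]
    (k : ℕ) (hk : 3 ≤ k) (β lam : ℂ)
    (hβ : ∃ y : V → ℂ, y ≠ 0 ∧ (G.adjMatrix ℂ).mulVec y = β • y)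
    (hlam : lam ^ k = β ^ 2) :
    IsHypergraphEigenvalue k (powerEdges G k) lam := by
  obtain ⟨y, hy0, hy⟩ := hβ
  obtain ⟨i₀, hi₀⟩ := Function.ne_iff.mp hy0
  rcases eq_or_ne lam 0 with rfl | hlam0
  · have : Nonempty V := ⟨i₀⟩
    exact isHypergraphEigenvalue_powerEdges_zero G hk
  have hβ0 : β ≠ 0 := by
    rintro rfl
    exact hlam0 (pow_eq_zero_iff (by omega : k ≠ 0) |>.mp (by rw [hlam]; ring))
  have hneighbors (i : V) : ∑ j ∈ G.neighborFinset i, y j = β * y i := by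
    simpa [SimpleGraph.adjMatrix_mulVec_apply] using congrFun hy i
  choose X hX using fun i => IsAlgClosed.exists_pow_nat_eq (y i ^ 2) (by omega : 0 < k)
  have hXX (a b : V) : (X a * X b) ^ k = lam ^ k * (y a * y b / β) ^ 2 := by
    rw [mul_pow, hX, hX, hlam]
    field_simp
  obtain ⟨z, hz⟩ := exists_sym2_pow_eq_and_mul_prod_eq hk hlam0 hXX
  have hX0 : X ≠ 0 := fun h => hi₀ <| pow_eq_zero_iff two_ne_zero |>.mp <| by
    rw [← hX, h, Pi.zero_apply, zero_pow (by omega)]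
  refine ⟨_, isHypergraphEigenpair_powerEdges G hk hX0 (fun i => ?_) fun a b _ t =>
    mul_pow_pred_eq_mul_prod_erase (by omega) (hXX a b) (hz a b).1 (hz a b).2 t⟩
  refine mul_pow_pred_eq_sum _ (by omega) hβ0 (hX i) (hneighbors i)
    (fun j _ => by rw [← mul_assoc]; exact (hz i j).2) fun hyi j _ => ?_
  have hzero (t : Fin (k - 2)) : z s(i, j) t = 0 :=
    pow_eq_zero_iff (by omega : k ≠ 0) |>.mp (by rw [(hz i j).1, hyi, zero_mul, zero_div])
  rw [prod_eq_zero (mem_univ ⟨0, by omega⟩) (hzero _), mul_zero]
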